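/- arXiv:2203.04256 — 2 statements merged into one kernel-verified Lean document; each statement's English description precedes it below -/
import Mathlib

section
/- A finite commutative ring R is an avoidance ring if and only if R is a principal ideal ring. -/
/-!
An ideal `I` of a finite ring is the finite union of the principal ideals `(x)`, `x ∈ I`; avoidance
puts `I` inside one of them, so `I = (x)`. Conversely, an ideal `(a)` covered by finitely many ideals
lies in any of them that contains `a`.
-/

/-- A commutative ring is an avoidance ring if every ideal contained in a finite
union of ideals is contained in one of them. -/
def IsAvoidanceRing (R : Type*) [CommRing R] : Prop :=
  ∀ (n : ℕ) (I : Ideal R) (f : Fin n → Ideal R),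
    (I : Set R) ⊆ (⋃ k, (f k : Set R)) → ∃ k, I ≤ f k

namespace IsAvoidanceRing

variable {R : Type*} [CommRing R]

theorem exists_le_of_subset_iUnion (hR : IsAvoidanceRing R) {ι : Type*} [Finite ι]
    {I : Ideal R} {f : ι → Ideal R} (h : (I : Set R) ⊆ ⋃ i, (f i : Set R)) :
    ∃ i, I ≤ f i := by
  obtain ⟨n, ⟨e⟩⟩ := Finite.exists_equiv_fin ι
  have hcover : (I : Set R) ⊆ ⋃ k, (f (e.symm k) : Set R) := by
    rwa [e.symm.surjective.iUnion_comp fun i ↦ (f i : Set R)]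
  obtain ⟨k, hk⟩ := hR n I (f ∘ e.symm) hcover
  exact ⟨e.symm k, hk⟩

theorem isPrincipal (hR : IsAvoidanceRing R) (I : Ideal R) [Finite I] : I.IsPrincipal := by
  obtain ⟨⟨x, hx⟩, hle⟩ := hR.exists_le_of_subset_iUnion (f := fun x : I ↦ Ideal.span {(x : R)})
    fun y hy ↦ Set.mem_iUnion.2 ⟨⟨y, hy⟩, Ideal.mem_span_singleton_self y⟩
  exact ⟨x, le_antisymm hle ((Ideal.span_singleton_le_iff_mem I).2 hx)⟩

end IsAvoidanceRing

theorem IsPrincipalIdealRing.isAvoidanceRing {R : Type*} [CommRing R] [IsPrincipalIdealRing R] :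
    IsAvoidanceRing R := by
  intro n I f hsub
  obtain ⟨k, hk⟩ := Set.mem_iUnion.1 (hsub (Submodule.IsPrincipal.generator_mem I))
  refine ⟨k, ?_⟩
  rw [← Submodule.IsPrincipal.span_singleton_generator I]
  exact (Ideal.span_singleton_le_iff_mem _).2 hk

theorem finite_avoidance_iff_pir {R : Type*} [CommRing R] [Finite R] :
    IsAvoidanceRing R ↔ IsPrincipalIdealRing R :=
  ⟨fun h ↦ ⟨fun I ↦ h.isPrincipal I⟩, fun _ ↦ IsPrincipalIdealRing.isAvoidanceRing⟩
end

section
/- If every finitely generated ideal of an integral domain R is a multiplication ideal, then R is an avoidance ring. -/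
/-!
It suffices to treat a finitely generated ideal `I ≠ 0` covered by `f₁, …, fₙ`, none of which
contains it. Writing `fₖ ∩ I = I Kₖ` with `Kₖ` proper and choosing maximal ideals `Pₖ ⊇ Kₖ` gives
`I ⊆ ⋃ₖ Pₖ I`. By Nakayama's lemma in a domain, `I ⊄ P I` for every proper `P`, and by the Chinese
remainder theorem an element of `I` can be chosen outside all of the finitely many `Pₖ I` at once.
-/

open Function

section

variable {R : Type*} [CommRing R]

theorem Submodule.exists_mem_forall_notMem_smul {M ι : Type*} [AddCommGroup M] [Module R M]
    [Finite ι] {Q : ι → Ideal R} (hQ : Pairwise (IsCoprime on Q)) {N : Submodule R M}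
    (hN : ∀ i, ¬ N ≤ Q i • N) : ∃ m ∈ N, ∀ i, m ∉ Q i • N := by
  classical
  cases nonempty_fintype ι
  choose v hvN hvQ using fun i => SetLike.not_le_iff_exists.mp (hN i)
  choose a ha using fun i => Ideal.exists_forall_sub_mem_ideal hQ (Pi.single i 1)
  -- `aᵢ ≡ δᵢₖ mod Qₖ`, so `∑ aᵢ vᵢ ≡ vₖ mod Qₖ N`.
  refine ⟨∑ i, a i • v i, sum_mem fun i _ => N.smul_mem _ (hvN i), fun k hk => hvQ k ?_⟩
  have hvk : v k = ∑ i, a i • v i - ∑ i, (a i - (Pi.single i 1 : ι → R) k) • v i := by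
    simp [sub_smul, Finset.sum_sub_distrib, Pi.single_apply]
  rw [hvk]
  exact sub_mem hk (sum_mem fun i _ => Submodule.smul_mem_smul (ha i k) (hvN i))

theorem Ideal.eq_top_of_le_mul_of_fg [IsDomain R] {I J : Ideal R} (hJ : J.FG) (hJ0 : J ≠ ⊥)
    (h : J ≤ I * J) : I = ⊤ := by
  obtain ⟨r, hrI, hr⟩ := Submodule.exists_mem_and_smul_eq_self_of_fg_of_le_smul I J hJ h
  obtain ⟨x, hxJ, hx0⟩ := Submodule.exists_mem_ne_zero_of_ne_bot hJ0
  have hr1 : r = 1 := (mul_left_inj' hx0).mp ((hr x hxJ).trans (one_mul x).symm)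
  exact (Ideal.eq_top_iff_one I).mpr (hr1 ▸ hrI)

def Ideal.IsMultiplication (I : Ideal R) : Prop :=
  ∀ J ≤ I, ∃ K : Ideal R, J = I * K

theorem Ideal.IsMultiplication.exists_isMaximal_inf_le_mul {I F : Ideal R}
    (hI : I.IsMultiplication) (hF : ¬ I ≤ F) : ∃ P : Ideal R, P.IsMaximal ∧ F ⊓ I ≤ P * I := by
  obtain ⟨K, hK⟩ := hI (F ⊓ I) inf_le_right
  have hKtop : K ≠ ⊤ := by
    rintro rfl
    exact hF (inf_eq_right.mp (hK.trans (Ideal.mul_top I)))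
  obtain ⟨P, hP, hKP⟩ := Ideal.exists_le_maximal K hKtop
  exact ⟨P, hP, hK ▸ mul_comm I K ▸ Ideal.mul_mono_left hKP⟩

theorem Ideal.IsMultiplication.exists_le_of_subset_iUnion [IsDomain R] {ι : Type*} [Finite ι]
    {I : Ideal R} (hI : I.IsMultiplication) (hfg : I.FG) {f : ι → Ideal R}
    (hcov : (I : Set R) ⊆ ⋃ k, (f k : Set R)) : ∃ k, I ≤ f k := by
  by_contra! hnot
  have hI0 : I ≠ ⊥ := by
    rintro rfl
    obtain ⟨k, -⟩ := Set.mem_iUnion.mp (hcov (zero_mem ⊥))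
    exact hnot k bot_le
  choose P hPmax hP using fun k => hI.exists_isMaximal_inf_le_mul (hnot k)
  have hcop : Pairwise (IsCoprime on (Subtype.val : Set.range P → Ideal R)) := by
    rintro ⟨_, k, rfl⟩ ⟨_, l, rfl⟩ hne
    exact Ideal.isCoprime_iff_sup_eq.mpr
      ((hPmax k).coprime_of_ne (hPmax l) fun h => hne (Subtype.ext h))
  have hnotle : ∀ Q : Set.range P, ¬ I ≤ Q.1 • I := by
    rintro ⟨_, k, rfl⟩ h
    exact (hPmax k).ne_top (Ideal.eq_top_of_le_mul_of_fg hfg hI0 h)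
  obtain ⟨m, hmI, hm⟩ := Submodule.exists_mem_forall_notMem_smul hcop hnotle
  obtain ⟨k, hk⟩ := Set.mem_iUnion.mp (hcov hmI)
  exact hm ⟨P k, k, rfl⟩ (hP k ⟨hk, hmI⟩)

theorem isAvoidanceRing_of_forall_fg
    (h : ∀ (n : ℕ) (I : Ideal R), I.FG → ∀ f : Fin n → Ideal R,
      (I : Set R) ⊆ ⋃ k, (f k : Set R) → ∃ k, I ≤ f k) :
    IsAvoidanceRing R := by
  intro n I f hcov
  by_contra! hnot
  choose x hxI hxf using fun k => SetLike.not_le_iff_exists.mp (hnot k)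
  have hspan : Ideal.span (Set.range x) ≤ I := Ideal.span_le.mpr (Set.range_subset_iff.mpr hxI)
  obtain ⟨k, hk⟩ := h n _ (Submodule.fg_span (Set.finite_range x)) f fun _ hy => hcov (hspan hy)
  exact hxf k (hk (Ideal.subset_span ⟨k, rfl⟩))

end

theorem avoidance_of_fg_multiplication_ideals {R : Type*} [CommRing R] [IsDomain R]
    (hmult : ∀ I : Ideal R, I.FG → ∀ J : Ideal R, J ≤ I → ∃ K : Ideal R, J = I * K) :
    IsAvoidanceRing R :=
  isAvoidanceRing_of_forall_fg fun _ I hI _ hcov =>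
    Ideal.IsMultiplication.exists_le_of_subset_iUnion (hmult I hI) hI hcov
end
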